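/- arXiv:2208.05131 — 2 statements merged into one kernel-verified Lean document; each statement's English description precedes it below -/
import Mathlib

section
/- Under the hypotheses of the energy-function soundness lemma (initial energy 0, energy decrease bounded by weighted edit distance along each transition, nonnegative energy at reachable triples with accepting P-state), for every run q0_T → q^1 → ⋯ → q^n of T on a string a_0⋯a_{n−1} ∈ L(P), the sum Σ_{i<n} wed(q^i, a_i) is nonnegative, where wed(q, c) = d − ed(c, δout(q, c)). -/
/-- Costs for the Levenshtein edit distance (formerly in Mathlib, `Mathlib.Data.List.EditDistance.Defs`). -/
structure Levenshtein.Cost (α β δ : Type*) where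
  delete : α → δ
  insert : β → δ
  substitute : α → β → δ

/-- The default unit costs (formerly in Mathlib). -/
def Levenshtein.defaultCost {α : Type*} [DecidableEq α] : Levenshtein.Cost α α ℕ where
  delete _ := 1
  insert _ := 1
  substitute a b := if a = b then 0 else 1

/-- The Levenshtein edit distance (formerly in Mathlib), by its defining recursion. -/
def levenshtein {α β δ : Type*} [AddZeroClass δ] [Min δ] (C : Levenshtein.Cost α β δ) :
    List α → List β → δ
  | [], [] => 0
  | x :: xs, [] => C.delete x + levenshtein C xs []
  | [], y :: ys => C.insert y + levenshtein C [] ys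
  | x :: xs, y :: ys =>
    min (C.delete x + levenshtein C xs (y :: ys))
      (min (C.insert y + levenshtein C (x :: xs) ys) (C.substitute x y + levenshtein C xs ys))

/-- Edit distance between two strings (lists), with unit insertion/deletion/substitution cost. -/
def ed {A : Type*} [DecidableEq A] (s t : List A) : ℕ :=
  levenshtein Levenshtein.defaultCost s t

/-- A total finite state transducer. -/
structure FT (Q A : Type*) where
  step : Q → A → Q
  out : Q → A → List A
  start : Q

namespace FT

variable {Q A : Type*} (T : FT Q A)

/-- Extended state-transition function. -/
def stepList : Q → List A → Q
  | q, [] => q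
  | q, a :: u => stepList (T.step q a) u

/-- Extended output function. -/
def outList : Q → List A → List A
  | _, [] => []
  | q, a :: u => T.out q a ++ outList (T.step q a) u

/-- The output of the transducer on a word. -/
def output (w : List A) : List A := T.outList T.start w

/-- Aggregate cost of `T` on a word, starting from state `q`. -/
def aggCost [DecidableEq A] : Q → List A → ℕ
  | _, [] => 0
  | q, a :: u => ed [a] (T.out q a) + aggCost (T.step q a) u

end FT

/-- The sum of `wed` along the run of `T` on a word, starting from state `q`. -/
def FT.wedSum {Q A : Type*} (T : FT Q A) (wed : Q → A → ℚ) : Q → List A → ℚ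
  | _, [] => 0
  | q, a :: u => wed q a + FT.wedSum T wed (T.step q a) u

theorem FT.energy_le_add_wedSum {A SP SQ Q : Type*} (P : DFA A SP) (R : DFA A SQ) (T : FT Q A)
    (wed : Q → A → ℚ) (en : SP → Q → SQ → ℚ)
    (hstep : ∀ p q r c,
      en (P.step p c) (T.step q c) (R.evalFrom r (T.out q c)) ≤ en p q r + wed q c) :
    ∀ (w : List A) p q r,
      en (P.evalFrom p w) (T.stepList q w) (R.evalFrom r (T.outList q w)) ≤
        en p q r + T.wedSum wed q w
  | [], p, q, r => by simp [FT.stepList, FT.outList, FT.wedSum]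
  | a :: u, p, q, r =>
    calc en (P.evalFrom p (a :: u)) (T.stepList q (a :: u)) (R.evalFrom r (T.outList q (a :: u)))
        = en (P.evalFrom (P.step p a) u) (T.stepList (T.step q a) u)
            (R.evalFrom (R.evalFrom r (T.out q a)) (T.outList (T.step q a) u)) := by
          rw [FT.stepList, FT.outList, DFA.evalFrom_cons, DFA.evalFrom_of_append]
      _ ≤ en (P.step p a) (T.step q a) (R.evalFrom r (T.out q a)) + T.wedSum wed (T.step q a) u :=
          FT.energy_le_add_wedSum P R T wed en hstep u _ _ _
      _ ≤ en p q r + wed q a + T.wedSum wed (T.step q a) u := by gcongr; exact hstep p q r a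
      _ = en p q r + T.wedSum wed q (a :: u) := by rw [FT.wedSum, add_assoc]

theorem wed_sum_nonneg_general {A SP SQ Q : Type*}
    (P : DFA A SP) (Qd : DFA A SQ) (T : FT Q A)
    (wed : Q → A → ℚ) (en : SP → Q → SQ → ℚ)
    (h1 : en P.start T.start Qd.start = 0)
    (h2 : ∀ p q r (c : A),
      en p q r ≥ en (P.step p c) (T.step q c) (Qd.evalFrom r (T.out q c)) - wed q c)
    (h3 : ∀ p q r,
      (∃ w : List A, P.evalFrom P.start w = p ∧ T.stepList T.start w = q ∧
        Qd.evalFrom Qd.start (T.outList T.start w) = r) →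
      p ∈ P.accept → en p q r ≥ 0) :
    ∀ w : List A, P.evalFrom P.start w ∈ P.accept →
      0 ≤ T.wedSum wed T.start w := by
  intro w hw
  have hrun := T.energy_le_add_wedSum P Qd wed en
    (fun p q r c => sub_le_iff_le_add.mp (h2 p q r c)) w P.start T.start Qd.start
  have hend := h3 _ _ _ ⟨w, rfl, rfl, rfl⟩ hw
  rw [h1, zero_add] at hrun
  exact hend.trans hrun

/-- Under the energy-function hypotheses, the sum of weighted edit distances along the run
of `T` on any string accepted by `P` is nonnegative. -/
theorem wed_sum_nonneg {A SP SQ Q : Type*} [DecidableEq A]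
    (P : DFA A SP) (Qd : DFA A SQ) (T : FT Q A) (d : ℚ)
    (wed : Q → A → ℚ) (en : SP → Q → SQ → ℚ)
    (hwed : ∀ q c, wed q c = d - ed [c] (T.out q c))
    (h1 : en P.start T.start Qd.start = 0)
    (h2 : ∀ p q r (c : A),
      en p q r ≥ en (P.step p c) (T.step q c) (Qd.evalFrom r (T.out q c)) - wed q c)
    (h3 : ∀ p q r,
      (∃ w : List A, P.evalFrom P.start w = p ∧ T.stepList T.start w = q ∧
        Qd.evalFrom Qd.start (T.outList T.start w) = r) →
      p ∈ P.accept → en p q r ≥ 0) :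
    ∀ w : List A, P.evalFrom P.start w ∈ P.accept →
      0 ≤ T.wedSum wed T.start w :=
  wed_sum_nonneg_general P Qd T wed en h1 h2 h3
end

section
/- If two total finite state transducers T1 and T2 (with finitely many states over a finite alphabet) compute different functions on Σ*, then there exists a string w of length at most |Q_{T1}| · |Q_{T2}| · (max(l_1, l_2) + 2) such that T1(w) ≠ T2(w), where l_i is the maximum transition-output length of T_i. -/
/-!
Take a shortest word `w` on which the transducers differ. If `w` were longer than
`|Q1| * |Q2|`, two of its proper prefixes `w.take i`, `w.take j` with `i < j` would lead to the
same pair of states. Both prefixes are shorter than `w`, so the transducers agree on them, and the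
difference of outputs on `w` is produced by the suffix `w.drop j` read from that pair of states.
Cutting out the loop `w[i, j)` therefore yields a shorter word on which they still differ.
-/

namespace FT

section Single

variable {Q A : Type*} (T : FT Q A)

theorem outList_append (q : Q) (u v : List A) :
    T.outList q (u ++ v) = T.outList q u ++ T.outList (T.stepList q u) v := by
  induction u generalizing q with
  | nil => rfl
  | cons a u ih => simp only [List.cons_append, outList, stepList, ih, List.append_assoc]

theorem output_append (u v : List A) :
    T.output (u ++ v) = T.output u ++ T.outList (T.stepList T.start u) v :=
  T.outList_append _ u v

end Single

section Pair

variable {Q1 Q2 A : Type*} (T1 : FT Q1 A) (T2 : FT Q2 A)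

theorem output_append_eq_iff {u : List A} (hu : T1.output u = T2.output u) (v : List A) :
    T1.output (u ++ v) = T2.output (u ++ v) ↔
      T1.outList (T1.stepList T1.start u) v = T2.outList (T2.stepList T2.start u) v := by
  rw [output_append, output_append, hu, List.append_cancel_left_eq]

theorem output_take_append_drop_ne {w : List A} {i j : ℕ}
    (hw : T1.output w ≠ T2.output w)
    (hi : T1.output (w.take i) = T2.output (w.take i))
    (hj : T1.output (w.take j) = T2.output (w.take j))
    (hs1 : T1.stepList T1.start (w.take i) = T1.stepList T1.start (w.take j))
    (hs2 : T2.stepList T2.start (w.take i) = T2.stepList T2.start (w.take j)) :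
    T1.output (w.take i ++ w.drop j) ≠ T2.output (w.take i ++ w.drop j) := by
  rw [← List.take_append_drop j w, Ne, output_append_eq_iff T1 T2 hj] at hw
  rwa [Ne, output_append_eq_iff T1 T2 hi, hs1, hs2]

theorem length_le_card_mul_card_of_minimal [Fintype Q1] [Fintype Q2] {w : List A}
    (hw : T1.output w ≠ T2.output w)
    (hmin : ∀ u : List A, u.length < w.length → T1.output u = T2.output u) :
    w.length ≤ Fintype.card Q1 * Fintype.card Q2 := by
  by_contra! hlong
  let states : Fin w.length → Q1 × Q2 := fun k =>
    (T1.stepList T1.start (w.take k), T2.stepList T2.start (w.take k))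
  obtain ⟨i, j, hij, hstates⟩ :=
    Fintype.exists_ne_map_eq_of_card_lt states (by simpa using hlong)
  wlog hlt : i < j generalizing i j
  · exact this j i hij.symm hstates.symm ((Fin.lt_or_lt_of_ne hij).resolve_left hlt)
  have hprefix (k : Fin w.length) : T1.output (w.take k) = T2.output (w.take k) :=
    hmin _ (by simp)
  have hcut := output_take_append_drop_ne T1 T2 hw (hprefix i) (hprefix j)
    (congrArg Prod.fst hstates) (congrArg Prod.snd hstates)
  have hshorter : (w.take i ++ w.drop j).length < w.length := by
    simp only [List.length_append, List.length_take, List.length_drop]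
    omega
  exact hcut (hmin _ hshorter)

end Pair

end FT

theorem List.exists_shortest_of_exists {A : Type*} {p : List A → Prop} (h : ∃ w, p w) :
    ∃ w, p w ∧ ∀ u : List A, u.length < w.length → ¬ p u := by
  obtain ⟨w, hw, hmin⟩ := (InvImage.wf List.length wellFounded_lt).has_min {w | p w} h
  exact ⟨w, hw, fun u hu hpu => hmin u hpu hu⟩

theorem short_witness_inequivalence_general {Q1 Q2 A : Type*}
    [Fintype Q1] [Fintype Q2]
    (T1 : FT Q1 A) (T2 : FT Q2 A) (l1 l2 : ℕ)
    (hne : ∃ w : List A, T1.output w ≠ T2.output w) :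
    ∃ w : List A,
      w.length ≤ Fintype.card Q1 * Fintype.card Q2 * (max l1 l2 + 2) ∧
      T1.output w ≠ T2.output w := by
  obtain ⟨w, hw, hmin⟩ := List.exists_shortest_of_exists hne
  have hshort := FT.length_le_card_mul_card_of_minimal T1 T2 hw fun u hu => not_not.mp (hmin u hu)
  exact ⟨w, hshort.trans (Nat.le_mul_of_pos_right _ (by omega)), hw⟩

/-- Short-witness bound for inequivalence of total transducers: if `T1` and `T2` compute
different functions, they differ on a string of length at most
`|Q1| * |Q2| * (max l1 l2 + 2)`. -/
theorem short_witness_inequivalence {Q1 Q2 A : Type*}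
    [Fintype Q1] [Fintype Q2] [Fintype A]
    (T1 : FT Q1 A) (T2 : FT Q2 A) (l1 l2 : ℕ)
    (hl1 : ∀ q c, (T1.out q c).length ≤ l1)
    (hl2 : ∀ q c, (T2.out q c).length ≤ l2)
    (hne : ∃ w : List A, T1.output w ≠ T2.output w) :
    ∃ w : List A,
      w.length ≤ Fintype.card Q1 * Fintype.card Q2 * (max l1 l2 + 2) ∧
      T1.output w ≠ T2.output w :=
  short_witness_inequivalence_general T1 T2 l1 l2 hne
end
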